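/- Fix 0 ≤ C < 1 and r ≥ 2. For n sufficiently large, every intersecting family F ⊆ binom([n], r) satisfies d_C(F) ≤ (1 - C)·binom(n-1, r-1), with equality only if F is a full star (all r-sets containing some fixed vertex). -/

import Mathlib

open Finset

def FamIntersecting (F : Finset (Finset ℕ)) : Prop :=
  ∀ A ∈ F, ∀ B ∈ F, (A ∩ B).Nonempty

def maxDeg (F : Finset (Finset ℕ)) : ℕ :=
  (F.biUnion id).sup fun x => (F.filter fun E => x ∈ E).card

def IsFlower (α : ℝ) (S : Finset (Finset ℕ)) (Y : Finset ℕ) : Prop :=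
  S.Nonempty ∧ (∀ A ∈ S, Y ⊆ A) ∧ (∀ x, (∀ A ∈ S, x ∈ A) → x ∈ Y) ∧
    ∀ T : Finset ℕ, (T.card : ℝ) ≤ α → ∃ A ∈ S, (A \ Y) ∩ T = ∅

def IsFlowerCore (α : ℝ) (F : Finset (Finset ℕ)) (Y : Finset ℕ) : Prop :=
  Y.Nonempty ∧ ∃ S ⊆ F, IsFlower α S Y

open scoped Classical in
noncomputable def flowerBase (α : ℝ) (F : Finset (Finset ℕ)) : Finset (Finset ℕ) :=
  (F.biUnion Finset.powerset).filter fun B =>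
    (IsFlowerCore α F B ∨ B ∈ F) ∧
    ∀ B', (IsFlowerCore α F B' ∨ B' ∈ F) → B' ⊆ B → B' = B

noncomputable def tau (F : Finset (Finset ℕ)) : ℕ :=
  sInf {k | ∃ T : Finset ℕ, T.card = k ∧ ∀ A ∈ F, (A ∩ T).Nonempty}

/-!
If all members of `F` share a point `x`, then `F` lies in the star of `x` and `Δ(F) = |F|`, so
`d_C(F) = (1 - C) |F| ≤ (1 - C) binom(n-1, r-1)`, with equality only for the full star.
Otherwise every point `x` is missed by some member `A`; the members through `x` all meet `A`
in a point other than `x`, so `Δ(F) ≤ r binom(n-2, r-2)`. Since every member also meets a fixed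
member `A₀`, `|F| ≤ r Δ(F) ≤ r² binom(n-2, r-2) = r² (r-1)/(n-1) · binom(n-1, r-1)`, which is
less than `(1 - C) binom(n-1, r-1)` as soon as `n - 1 > r³ / (1 - C)`.
-/

def fullStar (U : Finset ℕ) (r x : ℕ) : Finset (Finset ℕ) :=
  (U.powersetCard r).filter fun E => x ∈ E

lemma card_fullStar {U : Finset ℕ} {r x : ℕ} (hx : x ∈ U) (hr : 1 ≤ r) :
    #(fullStar U r x) = (#U - 1).choose (r - 1) := by
  have h := card_filter_powersetCard_subset {x} U r (singleton_subset_iff.2 hx) (by simpa)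
  simpa [fullStar] using h

lemma card_filter_mem_le_maxDeg (F : Finset (Finset ℕ)) (x : ℕ) :
    #(F.filter fun E => x ∈ E) ≤ maxDeg F := by
  obtain ⟨A, hA⟩ | hempty := (F.filter fun E => x ∈ E).eq_empty_or_nonempty.symm
  · have hxA := mem_filter.1 hA
    exact le_sup (f := fun x => #(F.filter fun E => x ∈ E)) (mem_biUnion.2 ⟨A, hxA.1, hxA.2⟩)
  · simp [hempty]

lemma maxDeg_le_card (F : Finset (Finset ℕ)) : maxDeg F ≤ #F :=
  Finset.sup_le fun _ _ => card_filter_le _ _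

lemma maxDeg_eq_card_of_forall_mem {F : Finset (Finset ℕ)} {x : ℕ} (hx : ∀ A ∈ F, x ∈ A) :
    maxDeg F = #F := by
  refine (maxDeg_le_card F).antisymm ?_
  simpa [filter_true_of_mem hx] using card_filter_mem_le_maxDeg F x

lemma card_le_card_mul_maxDeg {F : Finset (Finset ℕ)} (hFi : FamIntersecting F)
    {A : Finset ℕ} (hA : A ∈ F) :
    #F ≤ #A * maxDeg F := by
  have hcover : F ⊆ A.biUnion fun a => F.filter fun E => a ∈ E := by
    intro S hS
    obtain ⟨a, haSA⟩ := hFi S hS A hA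
    obtain ⟨haS, haA⟩ := mem_inter.1 haSA
    exact mem_biUnion.2 ⟨a, haA, mem_filter.2 ⟨hS, haS⟩⟩
  exact (card_le_card hcover).trans
    (card_biUnion_le_card_mul _ _ _ fun a _ => card_filter_mem_le_maxDeg F a)

section uniform

variable {U : Finset ℕ} {r : ℕ} {F : Finset (Finset ℕ)}

lemma sub_mul_maxDeg_le_of_subset_fullStar {x : ℕ} (hx : x ∈ U) (hr : 1 ≤ r)
    (hF : F ⊆ fullStar U r x) {C : ℝ} (hC1 : C < 1) :
    (#F : ℝ) - C * maxDeg F ≤ (1 - C) * (#U - 1).choose (r - 1) ∧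
      ((#F : ℝ) - C * maxDeg F = (1 - C) * (#U - 1).choose (r - 1) → F = fullStar U r x) := by
  have hdeg : maxDeg F = #F := maxDeg_eq_card_of_forall_mem fun A hA => (mem_filter.1 (hF hA)).2
  have hcard : (#F : ℝ) ≤ (#U - 1).choose (r - 1) := by
    rw [← card_fullStar hx hr]
    exact_mod_cast card_le_card hF
  have hC : (0 : ℝ) < 1 - C := by linarith
  rw [hdeg, ← one_sub_mul]
  refine ⟨mul_le_mul_of_nonneg_left hcard hC.le, fun heq => ?_⟩
  refine eq_of_subset_of_card_le hF ?_
  rw [card_fullStar hx hr]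
  exact_mod_cast (mul_left_cancel₀ hC.ne' heq).ge

lemma card_filter_mem_le_of_notMem (hF : F ⊆ U.powersetCard r) (hFi : FamIntersecting F)
    (hr : 2 ≤ r) {x : ℕ} (hx : x ∈ U) {A : Finset ℕ} (hA : A ∈ F) (hxA : x ∉ A) :
    #(F.filter fun E => x ∈ E) ≤ r * (#U - 2).choose (r - 2) := by
  obtain ⟨hAU, hAr⟩ := mem_powersetCard.1 (hF hA)
  have hcover : (F.filter fun E => x ∈ E) ⊆
      A.biUnion fun a => (U.powersetCard r).filter fun E => {x, a} ⊆ E := by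
    intro S hS
    obtain ⟨hSF, hxS⟩ := mem_filter.1 hS
    obtain ⟨a, haSA⟩ := hFi S hSF A hA
    obtain ⟨haS, haA⟩ := mem_inter.1 haSA
    exact mem_biUnion.2
      ⟨a, haA, mem_filter.2 ⟨hF hSF, insert_subset hxS (singleton_subset_iff.2 haS)⟩⟩
  have hpair_count : ∀ a ∈ A,
      #((U.powersetCard r).filter fun E => {x, a} ⊆ E) ≤ (#U - 2).choose (r - 2) := by
    intro a ha
    have hpair : #({x, a} : Finset ℕ) = 2 := card_pair fun h => hxA (h ▸ ha)
    rw [card_filter_powersetCard_subset {x, a} U r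
      (insert_subset hx (singleton_subset_iff.2 (hAU ha))) (hpair ▸ hr), hpair]
  calc #(F.filter fun E => x ∈ E) ≤ #(A.biUnion fun a => (U.powersetCard r).filter
          fun E => {x, a} ⊆ E) := card_le_card hcover
    _ ≤ #A * (#U - 2).choose (r - 2) := card_biUnion_le_card_mul _ _ _ hpair_count
    _ = r * (#U - 2).choose (r - 2) := by rw [hAr]

lemma card_le_sq_mul_choose_of_forall_exists_notMem (hF : F ⊆ U.powersetCard r)
    (hFi : FamIntersecting F) (hr : 2 ≤ r) (hno : ∀ x ∈ U, ∃ A ∈ F, x ∉ A) :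
    #F ≤ r ^ 2 * (#U - 2).choose (r - 2) := by
  obtain hempty | ⟨A₀, hA₀⟩ := F.eq_empty_or_nonempty
  · simp [hempty]
  have hdeg : maxDeg F ≤ r * (#U - 2).choose (r - 2) := by
    refine Finset.sup_le fun x hx => ?_
    obtain ⟨S, hS, hxS⟩ := mem_biUnion.1 hx
    have hxU : x ∈ U := (mem_powersetCard.1 (hF hS)).1 hxS
    obtain ⟨A, hA, hxA⟩ := hno x hxU
    exact card_filter_mem_le_of_notMem hF hFi hr hxU hA hxA
  calc #F ≤ #A₀ * maxDeg F := card_le_card_mul_maxDeg hFi hA₀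
    _ = r * maxDeg F := by rw [(mem_powersetCard.1 (hF hA₀)).2]
    _ ≤ r * (r * (#U - 2).choose (r - 2)) := Nat.mul_le_mul_left _ hdeg
    _ = r ^ 2 * (#U - 2).choose (r - 2) := by ring

end uniform

lemma sq_mul_choose_lt {n r : ℕ} (hr : 2 ≤ r) (hrn : r ≤ n) {C : ℝ}
    (hn : (r : ℝ) ^ 3 < (1 - C) * (n - 1)) :
    (r : ℝ) ^ 2 * (n - 2).choose (r - 2) < (1 - C) * (n - 1).choose (r - 1) := by
  obtain ⟨k, rfl⟩ : ∃ k, r = k + 2 := ⟨r - 2, by omega⟩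
  obtain ⟨m, rfl⟩ : ∃ m, n = m + 2 := ⟨n - 2, by omega⟩
  simp only [Nat.add_sub_cancel, show m + 2 - 1 = m + 1 by omega,
    show k + 2 - 1 = k + 1 by omega] at hn ⊢
  have hid : ((m + 1 : ℕ) : ℝ) * m.choose k = (m + 1).choose (k + 1) * (k + 1 : ℕ) := by
    exact_mod_cast Nat.add_one_mul_choose_eq m k
  have hb : (0 : ℝ) < m.choose k := by exact_mod_cast Nat.choose_pos (by omega)
  push_cast at hn hid ⊢
  have hk : ((k : ℝ) + 1) * (k + 2) ^ 2 < (1 - C) * (m + 1) := by nlinarith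
  refine lt_of_mul_lt_mul_left (a := (k : ℝ) + 1) ?_ (by positivity)
  calc ((k : ℝ) + 1) * ((k + 2) ^ 2 * m.choose k)
      = (k + 1) * (k + 2) ^ 2 * m.choose k := by ring
    _ < (1 - C) * (m + 1) * m.choose k := mul_lt_mul_of_pos_right hk hb
    _ = (k + 1) * ((1 - C) * (m + 1).choose (k + 1)) := by rw [mul_assoc, hid]; ring

theorem stmt18 (r : ℕ) (hr : 2 ≤ r) (C : ℝ) (hC0 : 0 ≤ C) (hC1 : C < 1) :
    ∃ N : ℕ, ∀ n ≥ N, ∀ F ⊆ (Finset.range n).powersetCard r, FamIntersecting F →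
      (F.card : ℝ) - C * maxDeg F ≤ (1 - C) * Nat.choose (n - 1) (r - 1) ∧
      ((F.card : ℝ) - C * maxDeg F = (1 - C) * Nat.choose (n - 1) (r - 1) →
        ∃ x ∈ Finset.range n,
          F = ((Finset.range n).powersetCard r).filter fun E => x ∈ E) := by
  refine ⟨⌈(r : ℝ) ^ 3 / (1 - C)⌉₊ + r + 2, fun n hn F hF hFi => ?_⟩
  by_cases hcommon : ∃ x ∈ range n, ∀ A ∈ F, x ∈ A
  · obtain ⟨x, hx, hxF⟩ := hcommon
    have h := sub_mul_maxDeg_le_of_subset_fullStar hx (by omega)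
      (fun A hA => mem_filter.2 ⟨hF hA, hxF A hA⟩) hC1
    rw [card_range] at h
    exact ⟨h.1, fun heq => ⟨x, hx, h.2 heq⟩⟩
  push Not at hcommon
  have hcard := card_le_sq_mul_choose_of_forall_exists_notMem hF hFi hr hcommon
  rw [card_range] at hcard
  have hthreshold : (r : ℝ) ^ 3 < (1 - C) * (n - 1) := by
    have hceil := Nat.le_ceil ((r : ℝ) ^ 3 / (1 - C))
    have hnN : ((⌈(r : ℝ) ^ 3 / (1 - C)⌉₊ + r + 2 : ℕ) : ℝ) ≤ n := by exact_mod_cast hn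
    rw [div_le_iff₀ (by linarith)] at hceil
    push_cast at hnN
    nlinarith
  have hlt : (F.card : ℝ) - C * maxDeg F < (1 - C) * (n - 1).choose (r - 1) :=
    calc (F.card : ℝ) - C * maxDeg F ≤ F.card := by
          have : 0 ≤ C * maxDeg F := by positivity
          linarith
      _ ≤ (r : ℝ) ^ 2 * (n - 2).choose (r - 2) := by exact_mod_cast hcard
      _ < (1 - C) * (n - 1).choose (r - 1) := sq_mul_choose_lt hr (by omega) hthreshold
  exact ⟨hlt.le, fun heq => absurd heq hlt.ne⟩
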